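/- Let T be a tree on a finite set I. The lattice Ad(T) is graded: for every T-admissible partition π of I, every saturated chain in Ad(T) from the partition of I into singletons up to π has length |I| − b(π), where b(π) denotes the number of blocks of π. -/

import Mathlib

set_option linter.unusedSectionVars false


open Finset

/-- A rooted binary tree with leaves labeled in `α`. -/
inductive BTree (α : Type) : Type where
  | leaf : α → BTree α
  | node : BTree α → BTree α → BTree α

namespace BTree

variable {α : Type} [DecidableEq α]

/-- The list of leaf labels of the tree. -/
def leafList : BTree α → List α
  | .leaf a => [a]
  | .node l r => l.leafList ++ r.leafList

/-- The set of leaf labels of the tree. -/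
def leaves (t : BTree α) : Finset α := t.leafList.toFinset

/-- `t` is a tree on the finite set `I`: its leaves are labeled bijectively by `I`. -/
def IsTreeOn (t : BTree α) (I : Finset α) : Prop :=
  t.leafList.Nodup ∧ t.leaves = I

/-- The set `V(t)` of internal vertices of the tree, each internal vertex being
represented by the set of its ancestor leaves (the leaf labels of the subtree
rooted there).  In this representation a vertex `v` is below a vertex `w` in the
ancestor order (i.e. `w` lies on the path from `v` to the root) exactly when
`v ⊆ w`. -/
def vertexSet : BTree α → Finset (Finset α)
  | .leaf _ => ∅
  | .node l r => insert (l.leaves ∪ r.leaves) (l.vertexSet ∪ r.vertexSet)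

/-- The list of internal vertices of the tree, recorded as the pairs
(left subtree, right subtree) hanging at each internal vertex. -/
def nodes : BTree α → List (BTree α × BTree α)
  | .leaf _ => []
  | .node l r => (l, r) :: (l.nodes ++ r.nodes)

/-- `meetVertex t i j` is the internal vertex `v_{(i,j)}` at which the paths from the
leaves labeled `i` and `j` towards the root first meet (as the set of its ancestor
leaves); meaningful when `i ≠ j` are both leaf labels of `t`. -/
def meetVertex : BTree α → α → α → Finset α
  | .leaf a, _, _ => {a}
  | .node l r, i, j =>
    if i ∈ l.leaves ∧ j ∈ l.leaves then l.meetVertex i j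
    else if i ∈ r.leaves ∧ j ∈ r.leaves then r.meetVertex i j
    else l.leaves ∪ r.leaves

/-- `S(J) = { v_{(i,j)} : i, j ∈ J, i ≠ j }`. -/
def S (t : BTree α) (J : Finset α) : Finset (Finset α) :=
  ((J ×ˢ J).filter fun p => p.1 ≠ p.2).image fun p => t.meetVertex p.1 p.2

/-- A partition `π` of `I` is `T`-admissible when `S(B) ∩ S(B') = ∅` for every pair of
distinct blocks `B, B'` of `π`. -/
def Admissible (t : BTree α) {I : Finset α} (π : Finpartition I) : Prop :=
  ∀ B ∈ π.parts, ∀ C ∈ π.parts, B ≠ C → t.S B ∩ t.S C = ∅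

/-- A nice total order on the internal vertices of `T`, encoded by an integer-valued
ranking function: it is injective on `V(T)` and is a linear extension of the ancestor
order (a vertex `v` is below `w`, i.e. `w` is on the path from `v` to the root, iff
`v ⊆ w` in the ancestor-leaves representation). -/
def IsNiceOrder (t : BTree α) (ord : Finset α → ℕ) : Prop :=
  Set.InjOn ord ↑t.vertexSet ∧
    ∀ v ∈ t.vertexSet, ∀ w ∈ t.vertexSet, v ⊆ w → ord v ≤ ord w

/-- A nice total order identifying `V(T)` with `{1, …, n}`. -/
def IsNiceLabeling (t : BTree α) (n : ℕ) (ord : Finset α → ℕ) : Prop :=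
  t.IsNiceOrder ord ∧ t.vertexSet.image ord = Finset.Icc 1 n

/-- list of all subtrees -/
def subtrees : BTree α → List (BTree α)
  | .leaf a => [.leaf a]
  | .node l r => .node l r :: (l.subtrees ++ r.subtrees)

lemma self_mem_subtrees (t : BTree α) : t ∈ t.subtrees := by
  cases t <;> simp [subtrees]

lemma leafList_ne_nil (t : BTree α) : t.leafList ≠ [] := by
  induction t with
  | leaf a => simp [leafList]
  | node l r ihl ihr => simp [leafList, ihl]

lemma leaves_nonempty (t : BTree α) : t.leaves.Nonempty := by
  have := t.leafList_ne_nil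
  cases h : t.leafList with
  | nil => exact absurd h this
  | cons a l => exact ⟨a, by simp [leaves, h]⟩

lemma mem_leaves {t : BTree α} {a : α} : a ∈ t.leaves ↔ a ∈ t.leafList := by
  simp [leaves]

lemma leaves_subset_of_subtree {s t : BTree α} (h : s ∈ t.subtrees) :
    s.leaves ⊆ t.leaves := by
  induction t with
  | leaf a => simp [subtrees] at h; subst h; exact fun x hx => hx
  | node l r ihl ihr =>
    simp [subtrees] at h
    rcases h with h | h | h
    · subst h; exact fun x hx => hx
    · intro x hx
      have := ihl h hx
      simp [mem_leaves, leafList] at this ⊢; exact Or.inl this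
    · intro x hx
      have := ihr h hx
      simp [mem_leaves, leafList] at this ⊢; exact Or.inr this

lemma nodup_of_subtree {s t : BTree α} (ht : t.leafList.Nodup) (h : s ∈ t.subtrees) :
    s.leafList.Nodup := by
  induction t with
  | leaf a => simp [subtrees] at h; subst h; exact ht
  | node l r ihl ihr =>
    simp [leafList, List.nodup_append] at ht
    simp [subtrees] at h
    rcases h with h | h | h
    · subst h; simp [leafList, List.nodup_append]; exact ht
    · exact ihl ht.1 h
    · exact ihr ht.2.1 h

lemma node_mem_subtrees_of_nodes {p : BTree α × BTree α} {t : BTree α}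
    (h : p ∈ t.nodes) : BTree.node p.1 p.2 ∈ t.subtrees := by
  induction t with
  | leaf a => simp [nodes] at h
  | node l r ihl ihr =>
    simp [nodes] at h
    rcases h with h | h | h
    · rcases p with ⟨p1, p2⟩; simp at h; rcases h with ⟨h1, h2⟩; subst h1; subst h2
      exact self_mem_subtrees _
    · simp [subtrees]; exact Or.inr (Or.inl (ihl h))
    · simp [subtrees]; exact Or.inr (Or.inr (ihr h))

end BTree

namespace BTree
variable {α : Type} [DecidableEq α]

lemma children_mem_subtrees {p : BTree α × BTree α} {t : BTree α}
    (h : p ∈ t.nodes) : p.1 ∈ t.subtrees ∧ p.2 ∈ t.subtrees := by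
  induction t with
  | leaf a => simp [nodes] at h
  | node l r ihl ihr =>
    simp [nodes] at h
    rcases h with h | h | h
    · rcases p with ⟨p1, p2⟩; simp at h; rcases h with ⟨h1, h2⟩; subst h1; subst h2
      constructor
      · simp [subtrees]; exact Or.inr (Or.inl (self_mem_subtrees _))
      · simp [subtrees]; exact Or.inr (Or.inr (self_mem_subtrees _))
    · have := ihl h
      constructor <;> · simp [subtrees]; right; left; tauto
    · have := ihr h
      constructor <;> · simp [subtrees]; right; right; tauto

/-- the leaf set of a node pair -/
def nodeSet (p : BTree α × BTree α) : Finset α := p.1.leaves ∪ p.2.leaves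

lemma nodes_disj {p : BTree α × BTree α} {t : BTree α} (ht : t.leafList.Nodup)
    (h : p ∈ t.nodes) : Disjoint p.1.leaves p.2.leaves := by
  have := nodup_of_subtree ht (node_mem_subtrees_of_nodes h)
  simp [leafList, List.nodup_append] at this
  rw [Finset.disjoint_left]
  intro a h1 h2
  exact this.2.2 _ (mem_leaves.1 h1) _ (mem_leaves.1 h2) rfl

lemma nodeSet_subset {p : BTree α × BTree α} {t : BTree α} (h : p ∈ t.nodes) :
    nodeSet p ⊆ t.leaves := by
  have h' := children_mem_subtrees h
  exact Finset.union_subset (leaves_subset_of_subtree h'.1) (leaves_subset_of_subtree h'.2)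

lemma leaves_node (l r : BTree α) : (BTree.node l r).leaves = l.leaves ∪ r.leaves := by
  simp [leaves, leafList]

lemma mem_leaves_node {l r : BTree α} {a : α} :
    a ∈ (BTree.node l r).leaves ↔ a ∈ l.leaves ∨ a ∈ r.leaves := by
  simp [leaves_node]

lemma meetVertex_comm (t : BTree α) (i j : α) : t.meetVertex i j = t.meetVertex j i := by
  induction t with
  | leaf a => rfl
  | node l r ihl ihr =>
    simp only [meetVertex, ihl, ihr]
    split_ifs <;> tauto

lemma mem_meetVertex {t : BTree α} {i j : α} (hi : i ∈ t.leaves) (hj : j ∈ t.leaves) :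
    i ∈ t.meetVertex i j ∧ j ∈ t.meetVertex i j := by
  induction t with
  | leaf a =>
    simp [leaves, leafList] at hi hj
    subst hi; subst hj; simp [meetVertex]
  | node l r ihl ihr =>
    rw [mem_leaves_node] at hi hj
    simp only [meetVertex]
    by_cases h1 : i ∈ l.leaves ∧ j ∈ l.leaves
    · rw [if_pos h1]; exact ihl h1.1 h1.2
    · rw [if_neg h1]
      by_cases h2 : i ∈ r.leaves ∧ j ∈ r.leaves
      · rw [if_pos h2]; exact ihr h2.1 h2.2
      · rw [if_neg h2]
        constructor <;> simp_all <;> tauto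

lemma meetVertex_subset {t : BTree α} {i j : α} :
    t.meetVertex i j ⊆ t.leaves := by
  induction t with
  | leaf a => simp [meetVertex, leaves, leafList]
  | node l r ihl ihr =>
    simp only [meetVertex]
    split
    · exact ihl.trans (by rw [leaves_node]; exact Finset.subset_union_left)
    · split
      · exact ihr.trans (by rw [leaves_node]; exact Finset.subset_union_right)
      · rw [leaves_node]

lemma meetVertex_subtree {s t : BTree α} (ht : t.leafList.Nodup) (hs : s ∈ t.subtrees)
    {i j : α} (hi : i ∈ s.leaves) (hj : j ∈ s.leaves) :
    t.meetVertex i j = s.meetVertex i j := by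
  induction t with
  | leaf a => simp [subtrees] at hs; subst hs; rfl
  | node l r ihl ihr =>
    simp only [leafList, List.nodup_append] at ht
    simp [subtrees] at hs
    rcases hs with h | h | h
    · subst h; rfl
    · have hsub := leaves_subset_of_subtree h
      have h1 : i ∈ l.leaves := hsub hi
      have h2 : j ∈ l.leaves := hsub hj
      simp only [meetVertex, if_pos (And.intro h1 h2)]
      exact ihl ht.1 h
    · have hsub := leaves_subset_of_subtree h
      have h1 : i ∈ r.leaves := hsub hi
      have h2 : j ∈ r.leaves := hsub hj
      have hnl : ¬ (i ∈ l.leaves ∧ j ∈ l.leaves) := by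
        intro hc
        exact ht.2.2 _ (mem_leaves.1 hc.1) _ (mem_leaves.1 h1) rfl
      simp only [meetVertex, if_neg hnl, if_pos (And.intro h1 h2)]
      exact ihr ht.2.1 h

lemma meetVertex_of_cross {t : BTree α} (ht : t.leafList.Nodup)
    {p : BTree α × BTree α} (hp : p ∈ t.nodes) {i j : α}
    (hi : i ∈ p.1.leaves) (hj : j ∈ p.2.leaves) :
    t.meetVertex i j = nodeSet p := by
  have h1 : t.meetVertex i j = (BTree.node p.1 p.2).meetVertex i j :=
    meetVertex_subtree ht (node_mem_subtrees_of_nodes hp)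
      (by rw [mem_leaves_node]; exact Or.inl hi) (by rw [mem_leaves_node]; exact Or.inr hj)
  have hd := nodes_disj ht hp
  have hnl : ¬ (i ∈ p.1.leaves ∧ j ∈ p.1.leaves) := fun hc =>
    (Finset.disjoint_left.1 hd hc.2) hj
  have hnr : ¬ (i ∈ p.2.leaves ∧ j ∈ p.2.leaves) := fun hc =>
    (Finset.disjoint_left.1 hd hi) hc.1
  rw [h1]
  simp only [meetVertex, if_neg hnl, if_neg hnr, nodeSet]

lemma meetVertex_char {t : BTree α} (ht : t.leafList.Nodup) {i j : α}
    (hi : i ∈ t.leaves) (hj : j ∈ t.leaves) (hij : i ≠ j) :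
    ∃ p ∈ t.nodes, t.meetVertex i j = nodeSet p ∧
      ((i ∈ p.1.leaves ∧ j ∈ p.2.leaves) ∨ (i ∈ p.2.leaves ∧ j ∈ p.1.leaves)) := by
  induction t with
  | leaf a =>
    simp [leaves, leafList] at hi hj; subst hi; subst hj; exact absurd rfl hij
  | node l r ihl ihr =>
    simp only [leafList, List.nodup_append] at ht
    rw [mem_leaves_node] at hi hj
    by_cases h1 : i ∈ l.leaves ∧ j ∈ l.leaves
    · obtain ⟨p, hp, h2, h3⟩ := ihl ht.1 h1.1 h1.2
      refine ⟨p, by simp [nodes]; tauto, ?_, h3⟩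
      simp only [meetVertex, if_pos h1]; exact h2
    · by_cases h2 : i ∈ r.leaves ∧ j ∈ r.leaves
      · obtain ⟨p, hp, h3, h4⟩ := ihr ht.2.1 h2.1 h2.2
        have hnl : ¬ (i ∈ l.leaves ∧ j ∈ l.leaves) := h1
        refine ⟨p, by simp [nodes]; tauto, ?_, h4⟩
        simp only [meetVertex, if_neg hnl, if_pos h2]; exact h3
      · refine ⟨(l, r), by simp [nodes], ?_, ?_⟩
        · simp only [meetVertex, if_neg h1, if_neg h2, nodeSet]
        · have hd : ∀ a, a ∈ l.leaves → a ∉ r.leaves := fun a ha hb =>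
            ht.2.2 _ (mem_leaves.1 ha) _ (mem_leaves.1 hb) rfl
          rcases hi with hi | hi <;> rcases hj with hj | hj
          · exact absurd ⟨hi, hj⟩ h1
          · exact Or.inl ⟨hi, hj⟩
          · exact Or.inr ⟨hi, hj⟩
          · exact absurd ⟨hi, hj⟩ h2

end BTree

namespace BTree
variable {α : Type} [DecidableEq α]

lemma mem_S_iff {t : BTree α} {J : Finset α} {v : Finset α} :
    v ∈ t.S J ↔ ∃ i ∈ J, ∃ j ∈ J, i ≠ j ∧ t.meetVertex i j = v := by
  simp only [S, Finset.mem_image, Finset.mem_filter, Finset.mem_product]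
  constructor
  · rintro ⟨⟨i, j⟩, ⟨⟨h1, h2⟩, h3⟩, h4⟩
    exact ⟨i, h1, j, h2, h3, h4⟩
  · rintro ⟨i, h1, j, h2, h3, h4⟩
    exact ⟨(i, j), ⟨⟨h1, h2⟩, h3⟩, h4⟩

lemma S_mono {t : BTree α} {J K : Finset α} (h : J ⊆ K) : t.S J ⊆ t.S K := by
  intro v hv
  rw [mem_S_iff] at hv ⊢
  obtain ⟨i, h1, j, h2, h3, h4⟩ := hv
  exact ⟨i, h h1, j, h h2, h3, h4⟩

lemma cross_mem_S {t : BTree α} (ht : t.leafList.Nodup) {J : Finset α}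
    {p : BTree α × BTree α} (hp : p ∈ t.nodes) {i j : α}
    (hiJ : i ∈ J) (hi : i ∈ p.1.leaves) (hjJ : j ∈ J) (hj : j ∈ p.2.leaves) :
    nodeSet p ∈ t.S J := by
  have hd := nodes_disj ht hp
  have hij : i ≠ j := fun h => (Finset.disjoint_left.1 hd hi) (h ▸ hj)
  exact mem_S_iff.2 ⟨i, hiJ, j, hjJ, hij, meetVertex_of_cross ht hp hi hj⟩

lemma mem_S_elim {t : BTree α} (ht : t.leafList.Nodup) {J : Finset α}
    (hJ : J ⊆ t.leaves) {v : Finset α} (hv : v ∈ t.S J) :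
    ∃ p ∈ t.nodes, v = nodeSet p ∧
      ∃ i ∈ J, ∃ j ∈ J, ((i ∈ p.1.leaves ∧ j ∈ p.2.leaves) ∨ (i ∈ p.2.leaves ∧ j ∈ p.1.leaves)) := by
  rw [mem_S_iff] at hv
  obtain ⟨i, h1, j, h2, h3, h4⟩ := hv
  obtain ⟨p, hp, h5, h6⟩ := meetVertex_char ht (hJ h1) (hJ h2) h3
  exact ⟨p, hp, h4 ▸ h5, i, h1, j, h2, h6⟩

lemma exists_mem_of_mem_S {t : BTree α} {J : Finset α}
    (hJ : J ⊆ t.leaves) {v : Finset α} (hv : v ∈ t.S J) :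
    ∃ a ∈ J, a ∈ v := by
  rw [mem_S_iff] at hv
  obtain ⟨i, h1, j, h2, h3, h4⟩ := hv
  exact ⟨i, h1, h4 ▸ (mem_meetVertex (hJ h1) (hJ h2)).1⟩

lemma tri {t : BTree α} (ht : t.leafList.Nodup)
    {p q : BTree α × BTree α} (hp : p ∈ t.nodes) (hq : q ∈ t.nodes) :
    nodeSet p ⊆ q.1.leaves ∨ nodeSet p ⊆ q.2.leaves ∨ nodeSet q ⊆ nodeSet p ∨
      Disjoint (nodeSet p) (nodeSet q) := by
  induction t with
  | leaf a => simp [nodes] at hp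
  | node l r ihl ihr =>
    have hdis : Disjoint l.leaves r.leaves := by
      simp only [leafList, List.nodup_append] at ht
      rw [Finset.disjoint_left]
      exact fun a h1 h2 => ht.2.2 _ (mem_leaves.1 h1) _ (mem_leaves.1 h2) rfl
    have hnodup : l.leafList.Nodup ∧ r.leafList.Nodup := by
      simp only [leafList, List.nodup_append] at ht
      exact ⟨ht.1, ht.2.1⟩
    simp only [nodes, List.mem_cons, List.mem_append] at hp hq
    rcases hq with hq | hq | hq
    · subst hq
      rcases hp with hp | hp | hp
      · subst hp; right; right; left; exact Finset.Subset.refl _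
      · exact Or.inl (nodeSet_subset hp)
      · exact Or.inr (Or.inl (nodeSet_subset hp))
    · rcases hp with hp | hp | hp
      · subst hp; right; right; left
        exact (nodeSet_subset hq).trans (by simp [nodeSet, leaves_node])
      · exact ihl hnodup.1 hp hq
      · right; right; right
        exact Finset.disjoint_of_subset_left (nodeSet_subset hp)
          (Finset.disjoint_of_subset_right (nodeSet_subset hq) hdis.symm)
    · rcases hp with hp | hp | hp
      · subst hp; right; right; left
        exact (nodeSet_subset hq).trans (by simp [nodeSet, leaves_node])
      · right; right; right
        exact Finset.disjoint_of_subset_left (nodeSet_subset hp)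
          (Finset.disjoint_of_subset_right (nodeSet_subset hq) hdis)
      · exact ihr hnodup.2 hp hq

lemma lca {t : BTree α} (ht : t.leafList.Nodup)
    {p q : BTree α × BTree α} (hp : p ∈ t.nodes) (hq : q ∈ t.nodes)
    (hd : Disjoint (nodeSet p) (nodeSet q)) :
    ∃ m ∈ t.nodes, (nodeSet p ⊆ m.1.leaves ∧ nodeSet q ⊆ m.2.leaves) ∨
      (nodeSet p ⊆ m.2.leaves ∧ nodeSet q ⊆ m.1.leaves) := by
  induction t with
  | leaf a => simp [nodes] at hp
  | node l r ihl ihr =>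
    have hnodup : l.leafList.Nodup ∧ r.leafList.Nodup := by
      simp only [leafList, List.nodup_append] at ht
      exact ⟨ht.1, ht.2.1⟩
    have hpn : (nodeSet p).Nonempty := ⟨_, Finset.mem_union_left _ p.1.leaves_nonempty.choose_spec⟩
    have hqn : (nodeSet q).Nonempty := ⟨_, Finset.mem_union_left _ q.1.leaves_nonempty.choose_spec⟩
    have hp' := hp; have hq' := hq
    simp only [nodes, List.mem_cons, List.mem_append] at hp hq
    rcases hp with hp | hp | hp
    · exfalso
      subst hp
      obtain ⟨x, hx⟩ := hqn
      have h1 : x ∈ (l.node r).leaves := nodeSet_subset hq' hx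
      rw [leaves_node] at h1
      exact Finset.disjoint_right.1 hd hx h1
    · rcases hq with hq | hq | hq
      · exfalso
        subst hq
        obtain ⟨x, hx⟩ := hpn
        have h1 : x ∈ (l.node r).leaves := nodeSet_subset hp' hx
        rw [leaves_node] at h1
        exact Finset.disjoint_left.1 hd hx h1
      · obtain ⟨m, hm, h⟩ := ihl hnodup.1 hp hq
        exact ⟨m, by simp [nodes]; tauto, h⟩
      · exact ⟨(l, r), by simp [nodes], Or.inl ⟨nodeSet_subset hp, nodeSet_subset hq⟩⟩
    · rcases hq with hq | hq | hq
      · exfalso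
        subst hq
        obtain ⟨x, hx⟩ := hpn
        have h1 : x ∈ (l.node r).leaves := nodeSet_subset hp' hx
        rw [leaves_node] at h1
        exact Finset.disjoint_left.1 hd hx h1
      · exact ⟨(l, r), by simp [nodes], Or.inr ⟨nodeSet_subset hp, nodeSet_subset hq⟩⟩
      · obtain ⟨m, hm, h⟩ := ihr hnodup.2 hp hq
        exact ⟨m, by simp [nodes]; tauto, h⟩

end BTree

namespace BTree
variable {α : Type} [DecidableEq α]

/-- Core geometric contradiction lemma. -/
lemma core {t : BTree α} (ht : t.leafList.Nodup)
    {p q : BTree α × BTree α} (hq : q ∈ t.nodes) (hp : p ∈ t.nodes)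
    {B₁ B₂ D : Finset α} {i j : α}
    (hi : i ∈ B₁) (hiq : i ∈ q.1.leaves) (hj : j ∈ B₂) (hjq : j ∈ q.2.leaves)
    (hor : ((∃ x ∈ B₁, x ∈ p.1.leaves) ∧ (∃ y ∈ B₂, y ∈ p.2.leaves))
         ∨ ((∃ x ∈ B₂, x ∈ p.1.leaves) ∧ (∃ y ∈ B₁, y ∈ p.2.leaves)))
    (h1 : ¬ ((∃ x ∈ B₁, x ∈ p.1.leaves) ∧ (∃ y ∈ B₁, y ∈ p.2.leaves)))
    (h2 : ¬ ((∃ x ∈ B₂, x ∈ p.1.leaves) ∧ (∃ y ∈ B₂, y ∈ p.2.leaves)))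
    (hDp : (D ∩ nodeSet p).Nonempty)
    (hDq : D ∩ nodeSet q = ∅)
    (hadm : t.S B₁ ∩ t.S B₂ = ∅) : False := by
  have hiq' : i ∈ nodeSet q := Finset.mem_union_left _ hiq
  have hjq' : j ∈ nodeSet q := Finset.mem_union_right _ hjq
  rcases tri ht hq hp with htr | htr | htr | htr
  · -- nodeSet q ⊆ p.1.leaves
    rcases hor with ⟨⟨x, hx1, hx2⟩, ⟨y, hy1, hy2⟩⟩ | ⟨⟨x, hx1, hx2⟩, ⟨y, hy1, hy2⟩⟩
    · -- y ∈ B₂ ∩ p.2; j ∈ B₂ ∩ (q ⊆ p.1) : B₂ crosses p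
      exact h2 ⟨⟨j, hj, htr hjq'⟩, ⟨y, hy1, hy2⟩⟩
    · exact h1 ⟨⟨i, hi, htr hiq'⟩, ⟨y, hy1, hy2⟩⟩
  · -- nodeSet q ⊆ p.2.leaves
    rcases hor with ⟨⟨x, hx1, hx2⟩, ⟨y, hy1, hy2⟩⟩ | ⟨⟨x, hx1, hx2⟩, ⟨y, hy1, hy2⟩⟩
    · exact h1 ⟨⟨x, hx1, hx2⟩, ⟨i, hi, htr hiq'⟩⟩
    · exact h2 ⟨⟨x, hx1, hx2⟩, ⟨j, hj, htr hjq'⟩⟩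
  · -- nodeSet p ⊆ nodeSet q : contradicts D ∩ nodeSet q = ∅
    obtain ⟨d, hd⟩ := hDp
    rw [Finset.mem_inter] at hd
    have : d ∈ D ∩ nodeSet q := Finset.mem_inter.2 ⟨hd.1, htr hd.2⟩
    rw [hDq] at this; exact absurd this (Finset.notMem_empty d)
  · -- disjoint: use lca
    obtain ⟨m, hm, hmc⟩ := lca ht hq hp htr
    -- note: lca was stated for (p,q); we need (q,p): use symm of disjoint
    have key : ∀ x ∈ B₁, x ∈ nodeSet p → ∀ y ∈ B₂, y ∈ nodeSet p → False := by
      intro x hx1 hx2 y hy1 hy2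
      rcases hmc with ⟨ha, hb⟩ | ⟨ha, hb⟩
      · -- nodeSet q ⊆ m.1, nodeSet p ⊆ m.2
        have e1 : nodeSet m ∈ t.S B₁ := cross_mem_S ht hm hi (ha hiq') hx1 (hb hx2)
        have e2 : nodeSet m ∈ t.S B₂ := cross_mem_S ht hm hj (ha hjq') hy1 (hb hy2)
        have : nodeSet m ∈ t.S B₁ ∩ t.S B₂ := Finset.mem_inter.2 ⟨e1, e2⟩
        rw [hadm] at this; exact absurd this (Finset.notMem_empty _)
      · have e1 : nodeSet m ∈ t.S B₁ := cross_mem_S ht hm hx1 (hb hx2) hi (ha hiq')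
        have e2 : nodeSet m ∈ t.S B₂ := cross_mem_S ht hm hy1 (hb hy2) hj (ha hjq')
        have : nodeSet m ∈ t.S B₁ ∩ t.S B₂ := Finset.mem_inter.2 ⟨e1, e2⟩
        rw [hadm] at this; exact absurd this (Finset.notMem_empty _)
    rcases hor with ⟨⟨x, hx1, hx2⟩, ⟨y, hy1, hy2⟩⟩ | ⟨⟨x, hx1, hx2⟩, ⟨y, hy1, hy2⟩⟩
    · exact key x hx1 (Finset.mem_union_left _ hx2) y hy1 (Finset.mem_union_right _ hy2)
    · exact key y hy1 (Finset.mem_union_right _ hy2) x hx1 (Finset.mem_union_left _ hx2)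

end BTree

section Merge
variable {α : Type} [DecidableEq α] {I : Finset α}

/-- Merging two blocks of a finpartition. -/
def mergePart (π : Finpartition I) (B₁ B₂ : Finset α) (h₁ : B₁ ∈ π.parts)
    (h₂ : B₂ ∈ π.parts) (hne : B₁ ≠ B₂) : Finpartition I where
  parts := insert (B₁ ∪ B₂) ((π.parts.erase B₁).erase B₂)
  supIndep := by
    rw [Finset.supIndep_iff_pairwiseDisjoint]
    intro a ha b hb hab
    simp only [Finset.coe_insert, Set.mem_insert_iff, Finset.mem_coe, Finset.mem_erase] at ha hb
    rcases ha with ha | ha <;> rcases hb with hb | hb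
    · exact absurd (ha.trans hb.symm) hab
    · subst ha
      simp only [Function.onFun, id_eq, Finset.disjoint_union_left]
      exact ⟨π.disjoint h₁ hb.2.2 (Ne.symm hb.2.1), π.disjoint h₂ hb.2.2 (Ne.symm hb.1)⟩
    · subst hb
      simp only [Function.onFun, id_eq, Finset.disjoint_union_right]
      exact ⟨π.disjoint ha.2.2 h₁ ha.2.1, π.disjoint ha.2.2 h₂ ha.1⟩
    · exact π.disjoint ha.2.2 hb.2.2 hab
  sup_parts := by
    have hB₂ : B₂ ∈ π.parts.erase B₁ := Finset.mem_erase.2 ⟨hne.symm, h₂⟩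
    have hrw : insert B₁ (insert B₂ ((π.parts.erase B₁).erase B₂)) = π.parts := by
      rw [Finset.insert_erase hB₂, Finset.insert_erase h₁]
    conv_rhs => rw [← π.sup_parts, ← hrw]
    simp [Finset.sup_insert, Finset.sup_eq_union, Finset.union_assoc]
  bot_notMem := by
    simp only [Finset.bot_eq_empty, Finset.mem_insert, Finset.mem_erase]
    rintro (h | ⟨-, -, h⟩)
    · obtain ⟨x, hx⟩ := π.nonempty_of_mem_parts h₁
      have hx' : x ∈ B₁ ∪ B₂ := Finset.mem_union_left _ hx
      rw [← h] at hx'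
      exact Finset.notMem_empty x hx'
    · exact π.bot_notMem h

variable {π : Finpartition I} {B₁ B₂ : Finset α} {h₁ : B₁ ∈ π.parts}
  {h₂ : B₂ ∈ π.parts} {hne : B₁ ≠ B₂}

lemma mergePart_parts :
    (mergePart π B₁ B₂ h₁ h₂ hne).parts = insert (B₁ ∪ B₂) ((π.parts.erase B₁).erase B₂) := rfl

lemma union_not_mem_erase (h₁ : B₁ ∈ π.parts) : B₁ ∪ B₂ ∉ (π.parts.erase B₁).erase B₂ := by
  intro h
  rw [Finset.mem_erase, Finset.mem_erase] at h
  obtain ⟨x, hx⟩ := π.nonempty_of_mem_parts h₁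
  exact h.2.1 (π.eq_of_mem_parts h.2.2 h₁ (Finset.mem_union_left _ hx) hx)

lemma mergePart_card :
    (mergePart π B₁ B₂ h₁ h₂ hne).parts.card + 1 = π.parts.card := by
  rw [mergePart_parts, Finset.card_insert_of_notMem (union_not_mem_erase h₁),
    Finset.card_erase_of_mem (Finset.mem_erase.2 ⟨hne.symm, h₂⟩), Finset.card_erase_of_mem h₁]
  have h2 : 2 ≤ π.parts.card := Finset.one_lt_card.2 ⟨B₁, h₁, B₂, h₂, hne⟩
  omega

lemma le_mergePart : π ≤ mergePart π B₁ B₂ h₁ h₂ hne := by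
  intro b hb
  by_cases hb1 : b = B₁
  · exact ⟨B₁ ∪ B₂, Finset.mem_insert_self _ _, hb1 ▸ Finset.subset_union_left⟩
  by_cases hb2 : b = B₂
  · exact ⟨B₁ ∪ B₂, Finset.mem_insert_self _ _, hb2 ▸ Finset.subset_union_right⟩
  · exact ⟨b, Finset.mem_insert_of_mem (Finset.mem_erase.2 ⟨hb2, Finset.mem_erase.2 ⟨hb1, hb⟩⟩),
      le_rfl⟩

lemma mergePart_ne : π ≠ mergePart π B₁ B₂ h₁ h₂ hne := by
  intro h
  have hmem : B₁ ∪ B₂ ∈ π.parts := by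
    rw [h, mergePart_parts]; exact Finset.mem_insert_self _ _
  obtain ⟨x, hx⟩ := π.nonempty_of_mem_parts h₂
  have := π.eq_of_mem_parts h₂ hmem hx (Finset.mem_union_right _ hx)
  obtain ⟨y, hy⟩ := π.nonempty_of_mem_parts h₁
  exact hne (π.eq_of_mem_parts h₁ h₂ hy (by rw [this]; exact Finset.mem_union_left _ hy))

lemma mergePart_le {τ : Finpartition I} (hle : π ≤ τ) {C : Finset α} (hC : C ∈ τ.parts)
    (hB₁C : B₁ ⊆ C) (hB₂C : B₂ ⊆ C) : mergePart π B₁ B₂ h₁ h₂ hne ≤ τ := by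
  intro b hb
  rw [mergePart_parts, Finset.mem_insert] at hb
  rcases hb with hb | hb
  · exact ⟨C, hC, hb ▸ Finset.union_subset hB₁C hB₂C⟩
  · exact hle (Finset.mem_erase.1 (Finset.mem_erase.1 hb).2).2

end Merge

namespace BTree
variable {α : Type} [DecidableEq α]

lemma main_aux {t : BTree α} {I : Finset α} (ht : t.leafList.Nodup) (hI : t.leaves = I)
    {π τ : Finpartition I} (hπ : t.Admissible π) (hτ : t.Admissible τ)
    (hle : π ≤ τ) {C : Finset α} (hC : C ∈ τ.parts)
    {q : BTree α × BTree α} (hq : q ∈ t.nodes)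
    {B₁ B₂ : Finset α} (hB₁ : B₁ ∈ π.parts) (hB₂ : B₂ ∈ π.parts) (hBne : B₁ ≠ B₂)
    (hB₁C : B₁ ⊆ C) (hB₂C : B₂ ⊆ C)
    {i j : α} (hi : i ∈ B₁) (hiq : i ∈ q.1.leaves) (hj : j ∈ B₂) (hjq : j ∈ q.2.leaves)
    (hmin : ∀ a ∈ C, ∀ b ∈ C, (∀ B ∈ π.parts, ¬(a ∈ B ∧ b ∈ B)) →
       (nodeSet q).card ≤ (t.meetVertex a b).card) :
    t.Admissible (mergePart π B₁ B₂ hB₁ hB₂ hBne) := by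
  have hdisjq := nodes_disj ht hq
  have hcardq : q.1.leaves.card + q.2.leaves.card = (nodeSet q).card :=
    (Finset.card_union_of_disjoint hdisjq).symm
  -- C ∩ q.1.leaves ⊆ B₁
  have hC1 : C ∩ q.1.leaves ⊆ B₁ := by
    intro x hx
    rw [Finset.mem_inter] at hx
    by_contra hxB
    have hdiff : ∀ B ∈ π.parts, ¬(i ∈ B ∧ x ∈ B) := by
      rintro B hB ⟨hiB, hxB'⟩
      exact hxB (π.eq_of_mem_parts hB hB₁ hiB hi ▸ hxB')
    have hmm := hmin i (hB₁C hi) x hx.1 hdiff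
    have hix : i ≠ x := fun h => hxB (h ▸ hi)
    have hmeet : t.meetVertex i x = q.1.meetVertex i x :=
      meetVertex_subtree ht (children_mem_subtrees hq).1 hiq hx.2
    have hsub : t.meetVertex i x ⊆ q.1.leaves := by
      rw [hmeet]; exact meetVertex_subset
    have hle1 : (t.meetVertex i x).card ≤ q.1.leaves.card := Finset.card_le_card hsub
    obtain ⟨y, hy⟩ := q.2.leaves_nonempty
    have : 0 < q.2.leaves.card := Finset.card_pos.2 ⟨y, hy⟩
    omega
  have hC2 : C ∩ q.2.leaves ⊆ B₂ := by
    intro x hx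
    rw [Finset.mem_inter] at hx
    by_contra hxB
    have hdiff : ∀ B ∈ π.parts, ¬(x ∈ B ∧ j ∈ B) := by
      rintro B hB ⟨hxB', hjB⟩
      exact hxB (π.eq_of_mem_parts hB hB₂ hjB hj ▸ hxB')
    have hmm := hmin x hx.1 j (hB₂C hj) hdiff
    have hjx : x ≠ j := fun h => hxB (h ▸ hj)
    have hmeet : t.meetVertex x j = q.2.meetVertex x j :=
      meetVertex_subtree ht (children_mem_subtrees hq).2 hx.2 hjq
    have hsub : t.meetVertex x j ⊆ q.2.leaves := by
      rw [hmeet]; exact meetVertex_subset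
    have hle1 : (t.meetVertex x j).card ≤ q.2.leaves.card := Finset.card_le_card hsub
    obtain ⟨y, hy⟩ := q.1.leaves_nonempty
    have : 0 < q.1.leaves.card := Finset.card_pos.2 ⟨y, hy⟩
    omega
  -- key claim : S (B₁ ∪ B₂) ∩ S D = ∅ for old parts D
  have key : ∀ D ∈ (π.parts.erase B₁).erase B₂, t.S (B₁ ∪ B₂) ∩ t.S D = ∅ := by
    intro D hD'
    rw [Finset.mem_erase, Finset.mem_erase] at hD'
    obtain ⟨hDB₂, hDB₁, hD⟩ := hD'
    by_contra hcon
    obtain ⟨v, hv⟩ := Finset.nonempty_iff_ne_empty.2 hcon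
    rw [Finset.mem_inter] at hv
    obtain ⟨hv1, hv2⟩ := hv
    have hsubI : B₁ ∪ B₂ ⊆ t.leaves := by
      rw [hI]; exact Finset.union_subset (π.le hB₁) (π.le hB₂)
    have hDI : D ⊆ t.leaves := by rw [hI]; exact π.le hD
    obtain ⟨p, hp, hvp, x0, hx0, y0, hy0, hxy0⟩ := mem_S_elim ht hsubI hv1
    -- extract elements of B₁ ∪ B₂ on both sides of p
    have hcross : (∃ x ∈ B₁ ∪ B₂, x ∈ p.1.leaves) ∧ (∃ y ∈ B₁ ∪ B₂, y ∈ p.2.leaves) := by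
      rcases hxy0 with ⟨ha, hb⟩ | ⟨ha, hb⟩
      · exact ⟨⟨x0, hx0, ha⟩, ⟨y0, hy0, hb⟩⟩
      · exact ⟨⟨y0, hy0, hb⟩, ⟨x0, hx0, ha⟩⟩
    -- B₁ does not cross p
    have h1 : ¬ ((∃ x ∈ B₁, x ∈ p.1.leaves) ∧ (∃ y ∈ B₁, y ∈ p.2.leaves)) := by
      rintro ⟨⟨x, hx1, hx2⟩, ⟨y, hy1, hy2⟩⟩
      have : nodeSet p ∈ t.S B₁ := cross_mem_S ht hp hx1 hx2 hy1 hy2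
      have hmem : nodeSet p ∈ t.S B₁ ∩ t.S D := Finset.mem_inter.2 ⟨this, hvp ▸ hv2⟩
      rw [hπ B₁ hB₁ D hD (Ne.symm hDB₁)] at hmem
      exact Finset.notMem_empty _ hmem
    have h2 : ¬ ((∃ x ∈ B₂, x ∈ p.1.leaves) ∧ (∃ y ∈ B₂, y ∈ p.2.leaves)) := by
      rintro ⟨⟨x, hx1, hx2⟩, ⟨y, hy1, hy2⟩⟩
      have : nodeSet p ∈ t.S B₂ := cross_mem_S ht hp hx1 hx2 hy1 hy2
      have hmem : nodeSet p ∈ t.S B₂ ∩ t.S D := Finset.mem_inter.2 ⟨this, hvp ▸ hv2⟩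
      rw [hπ B₂ hB₂ D hD (Ne.symm hDB₂)] at hmem
      exact Finset.notMem_empty _ hmem
    -- orientation
    have hor : ((∃ x ∈ B₁, x ∈ p.1.leaves) ∧ (∃ y ∈ B₂, y ∈ p.2.leaves))
         ∨ ((∃ x ∈ B₂, x ∈ p.1.leaves) ∧ (∃ y ∈ B₁, y ∈ p.2.leaves)) := by
      obtain ⟨⟨x, hx1, hx2⟩, ⟨y, hy1, hy2⟩⟩ := hcross
      rw [Finset.mem_union] at hx1 hy1
      rcases hx1 with hx1 | hx1 <;> rcases hy1 with hy1 | hy1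
      · exact absurd ⟨⟨x, hx1, hx2⟩, ⟨y, hy1, hy2⟩⟩ h1
      · exact Or.inl ⟨⟨x, hx1, hx2⟩, ⟨y, hy1, hy2⟩⟩
      · exact Or.inr ⟨⟨x, hx1, hx2⟩, ⟨y, hy1, hy2⟩⟩
      · exact absurd ⟨⟨x, hx1, hx2⟩, ⟨y, hy1, hy2⟩⟩ h2
    -- D ⊆ C
    have hvSC : v ∈ t.S C := by
      obtain ⟨⟨x, hx1, hx2⟩, ⟨y, hy1, hy2⟩⟩ := hcross
      have hxC : x ∈ C := by
        rw [Finset.mem_union] at hx1; rcases hx1 with h | h; exacts [hB₁C h, hB₂C h]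
      have hyC : y ∈ C := by
        rw [Finset.mem_union] at hy1; rcases hy1 with h | h; exacts [hB₁C h, hB₂C h]
      rw [hvp]; exact cross_mem_S ht hp hxC hx2 hyC hy2
    have hDC : D ⊆ C := by
      obtain ⟨C', hC', hDC'⟩ := hle hD
      have hvC' : v ∈ t.S C' := S_mono hDC' hv2
      by_cases hCC : C' = C
      · exact hCC ▸ hDC'
      · have : v ∈ t.S C' ∩ t.S C := Finset.mem_inter.2 ⟨hvC', hvSC⟩
        rw [hτ C' hC' C hC hCC] at this
        exact absurd this (Finset.notMem_empty _)
    -- D ∩ nodeSet q = ∅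
    have hDq : D ∩ nodeSet q = ∅ := by
      rw [Finset.eq_empty_iff_forall_notMem]
      intro a ha
      rw [Finset.mem_inter, nodeSet, Finset.mem_union] at ha
      rcases ha.2 with h | h
      · have : a ∈ B₁ := hC1 (Finset.mem_inter.2 ⟨hDC ha.1, h⟩)
        exact (Finset.disjoint_left.1 (π.disjoint hD hB₁ hDB₁) ha.1) this
      · have : a ∈ B₂ := hC2 (Finset.mem_inter.2 ⟨hDC ha.1, h⟩)
        exact (Finset.disjoint_left.1 (π.disjoint hD hB₂ hDB₂) ha.1) this
    have hDp : (D ∩ nodeSet p).Nonempty := by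
      obtain ⟨a, ha1, ha2⟩ := exists_mem_of_mem_S hDI hv2
      exact ⟨a, Finset.mem_inter.2 ⟨ha1, hvp ▸ ha2⟩⟩
    exact core ht hq hp hi hiq hj hjq hor h1 h2 hDp hDq (hπ B₁ hB₁ B₂ hB₂ hBne)
  -- now verify admissibility of the merged partition
  intro P hP Q hQ hPQ
  rw [mergePart_parts, Finset.mem_insert] at hP hQ
  rcases hP with hP | hP <;> rcases hQ with hQ | hQ
  · exact absurd (hP.trans hQ.symm) hPQ
  · exact hP ▸ key Q hQ
  · rw [Finset.inter_comm]; exact hQ ▸ key P hP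
  · have hP' := Finset.mem_erase.1 (Finset.mem_erase.1 hP).2
    have hQ' := Finset.mem_erase.1 (Finset.mem_erase.1 hQ).2
    exact hπ P hP'.2 Q hQ'.2 hPQ

end BTree

namespace BTree
variable {α : Type} [DecidableEq α]

lemma exists_merge {t : BTree α} {I : Finset α} (ht : t.leafList.Nodup) (hI : t.leaves = I)
    {π τ : Finpartition I} (hπ : t.Admissible π) (hτ : t.Admissible τ)
    (hle : π ≤ τ) (hne : π ≠ τ) :
    ∃ σ : Finpartition I, t.Admissible σ ∧ π ≤ σ ∧ σ ≤ τ ∧ π ≠ σ ∧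
      σ.parts.card + 1 = π.parts.card := by
  classical
  -- find a τ-part with two elements in distinct π-parts
  have hex : ∃ C ∈ τ.parts, ∃ a ∈ C, ∃ b ∈ C, ∀ B ∈ π.parts, ¬(a ∈ B ∧ b ∈ B) := by
    by_contra h
    push_neg at h
    apply hne
    refine le_antisymm hle (fun C hC => ?_)
    obtain ⟨x, hx⟩ := τ.nonempty_of_mem_parts hC
    have hxI : x ∈ I := τ.le hC hx
    refine ⟨π.part x, π.part_mem.2 hxI, fun y hy => ?_⟩
    obtain ⟨B, hB, hxB, hyB⟩ := h C hC x hx y hy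
    rw [π.part_eq_of_mem hB hxB]
    exact hyB
  obtain ⟨C, hC, a0, ha0, b0, hb0, hab0⟩ := hex
  -- the finset of "separated pairs" in C
  set P : Finset (α × α) :=
    (C ×ˢ C).filter (fun ab => ∀ B ∈ π.parts, ¬(ab.1 ∈ B ∧ ab.2 ∈ B)) with hP
  have hPne : P.Nonempty := ⟨(a0, b0), by
    rw [hP, Finset.mem_filter, Finset.mem_product]; exact ⟨⟨ha0, hb0⟩, hab0⟩⟩
  obtain ⟨⟨i, j⟩, hijP, hmin0⟩ :=
    P.exists_min_image (fun ab => (t.meetVertex ab.1 ab.2).card) hPne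
  rw [hP, Finset.mem_filter, Finset.mem_product] at hijP
  obtain ⟨⟨hiC, hjC⟩, hsep⟩ := hijP
  have hmin : ∀ a ∈ C, ∀ b ∈ C, (∀ B ∈ π.parts, ¬(a ∈ B ∧ b ∈ B)) →
      (t.meetVertex i j).card ≤ (t.meetVertex a b).card := by
    intro a ha b hb hd
    exact hmin0 (a, b) (by rw [hP, Finset.mem_filter, Finset.mem_product]; exact ⟨⟨ha, hb⟩, hd⟩)
  have hiI : i ∈ I := τ.le hC hiC
  have hjI : j ∈ I := τ.le hC hjC
  have hij : i ≠ j := by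
    intro h
    obtain ⟨B, hB, hiB⟩ := π.exists_mem hiI
    exact hsep B hB ⟨hiB, h ▸ hiB⟩
  set B₁ := π.part i with hB₁def
  set B₂ := π.part j with hB₂def
  have hB₁ : B₁ ∈ π.parts := π.part_mem.2 hiI
  have hB₂ : B₂ ∈ π.parts := π.part_mem.2 hjI
  have hi : i ∈ B₁ := π.mem_part hiI
  have hj : j ∈ B₂ := π.mem_part hjI
  have hBne : B₁ ≠ B₂ := fun h => hsep B₁ hB₁ ⟨hi, h ▸ hj⟩
  have hpartC : ∀ B ∈ π.parts, ∀ x ∈ B, x ∈ C → B ⊆ C := by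
    intro B hB x hxB hxC
    obtain ⟨C', hC', hBC'⟩ := hle hB
    rwa [τ.eq_of_mem_parts hC' hC (hBC' hxB) hxC] at hBC'
  have hB₁C : B₁ ⊆ C := hpartC B₁ hB₁ i hi hiC
  have hB₂C : B₂ ⊆ C := hpartC B₂ hB₂ j hj hjC
  obtain ⟨q, hq, hmeetq, hor⟩ := meetVertex_char ht (hI.symm ▸ hiI) (hI.symm ▸ hjI) hij
  rcases hor with ⟨hiq, hjq⟩ | ⟨hiq, hjq⟩
  · refine ⟨mergePart π B₁ B₂ hB₁ hB₂ hBne,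
      main_aux ht hI hπ hτ hle hC hq hB₁ hB₂ hBne hB₁C hB₂C hi hiq hj hjq ?_,
      le_mergePart, mergePart_le hle hC hB₁C hB₂C, mergePart_ne, mergePart_card⟩
    intro a ha b hb hd
    rw [← hmeetq]
    exact hmin a ha b hb hd
  · refine ⟨mergePart π B₂ B₁ hB₂ hB₁ (Ne.symm hBne),
      main_aux ht hI hπ hτ hle hC hq hB₂ hB₁ (Ne.symm hBne) hB₂C hB₁C hj hjq hi hiq ?_,
      le_mergePart, mergePart_le hle hC hB₂C hB₁C, mergePart_ne, mergePart_card⟩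
    intro a ha b hb hd
    rw [← hmeetq]
    exact hmin a ha b hb hd

end BTree


/-- The poset `Ad(T)` of `T`-admissible partitions of `I`, ordered by refinement
(the order is inherited from the refinement order on `Finpartition I`). -/
def AdPartition {α : Type} [DecidableEq α] (T : BTree α) (I : Finset α) : Type :=
  {π : Finpartition I // T.Admissible π}

namespace AdPartition

variable {α : Type} [DecidableEq α] {T : BTree α} {I : Finset α}

instance : PartialOrder (AdPartition T I) := Subtype.partialOrder _

/-- The set `V(π)` of internal vertices of a partition: the union of the `S(B)` over
the blocks `B` of `π`. -/
def verts (T : BTree α) {I : Finset α} (π : Finpartition I) : Finset (Finset α) :=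
  π.parts.sup fun B => T.S B

/-- The edge label `λ(π, τ)` of a covering relation `π ⋖ τ` in `Ad(T)`: the unique
internal vertex `v` with `V(τ) = V(π) ∪ {v}` (extracted here as the union of the
finset `V(τ) \ V(π)`, which is the singleton `{v}` when `π ⋖ τ`). -/
def label (T : BTree α) {I : Finset α} (π τ : AdPartition T I) : Finset α :=
  (verts T τ.1 \ verts T π.1).sup id

/-- The label sequence, with respect to a nice order `ord`, of a saturated chain
recorded as a list of consecutive elements. -/
def labelSeq (T : BTree α) {I : Finset α} (ord : Finset α → ℕ)
    (c : List (AdPartition T I)) : List ℕ :=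
  (c.zip c.tail).map fun p => ord (label T p.1 p.2)

/-- The atom of `Ad(T)` whose unique doubleton block is `{p, q}`, all other blocks
being singletons. -/
def IsAtomPart (T : BTree α) (I : Finset α) (a : AdPartition T I) (p q : α) : Prop :=
  p ≠ q ∧ a.1.parts = insert {p, q} ((I \ {p, q}).image fun x => ({x} : Finset α))

end AdPartition

section LatticeGen

variable {P : Type*} [PartialOrder P]

/-- A subset of a partial order closed under existing pairwise joins and meets. -/
def IsLatClosed (D : Set P) : Prop :=
  (∀ x ∈ D, ∀ y ∈ D, ∀ z, IsLUB {x, y} z → z ∈ D) ∧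
    (∀ x ∈ D, ∀ y ∈ D, ∀ z, IsGLB {x, y} z → z ∈ D)

/-- The sublattice generated by a subset of a partial order: the smallest subset
containing it that is closed under pairwise joins and meets. -/
def latticeGen (s : Set P) : Set P :=
  ⋂₀ {D : Set P | s ⊆ D ∧ IsLatClosed D}

/-- The subset `D`, with the induced join and meet, is a distributive lattice:
`x ∧ (y ∨ z) = (x ∧ y) ∨ (x ∧ z)` for all `x, y, z ∈ D`. -/
def IsDistribSet (D : Set P) : Prop :=
  ∀ x ∈ D, ∀ y ∈ D, ∀ z ∈ D,
    ∀ yz, IsLUB {y, z} yz → ∀ w, IsGLB {x, yz} w →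
      ∀ xy, IsGLB {x, y} xy → ∀ xz, IsGLB {x, z} xz →
        ∀ u, IsLUB {xy, xz} u → w = u

end LatticeGen

/-- `Ad(T)` is graded: every saturated chain from the singleton
partition up to `π` has length `|I| − b(π)`, where `b(π)` is the number of blocks. -/
theorem stmt3 {α : Type} [DecidableEq α] (I : Finset α) (T : BTree α)
    (hT : T.IsTreeOn I) (π : AdPartition T I)
    (k : ℕ) (c : Fin (k + 1) → AdPartition T I)
    (hchain : ∀ r : Fin k, c r.castSucc ⋖ c r.succ)
    (hbot : (c 0).1.parts = I.image (fun i => ({i} : Finset α)))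
    (htop : c (Fin.last k) = π) :
    k + π.1.parts.card = I.card := by
  have key : ∀ r : Fin k, (c r.succ).1.parts.card + 1 = (c r.castSucc).1.parts.card := by
    intro r
    have hcov := hchain r
    have hlt := hcov.1
    have hle : (c r.castSucc).1 ≤ (c r.succ).1 := hlt.le
    have hne : (c r.castSucc).1 ≠ (c r.succ).1 := fun h => hlt.ne (Subtype.ext h)
    obtain ⟨σ, hσadm, h1, h2, h3, h4⟩ :=
      BTree.exists_merge hT.1 hT.2 (c r.castSucc).2 (c r.succ).2 hle hne
    have h1' : c r.castSucc ≤ (⟨σ, hσadm⟩ : AdPartition T I) := h1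
    have h2' : (⟨σ, hσadm⟩ : AdPartition T I) ≤ c r.succ := h2
    have heq : (⟨σ, hσadm⟩ : AdPartition T I) = c r.succ := by
      by_contra hne2
      exact hcov.2 (lt_of_le_of_ne h1' (fun h => h3 (congrArg Subtype.val h)))
        (lt_of_le_of_ne h2' hne2)
    have hval : σ = (c r.succ).1 := congrArg Subtype.val heq
    rw [← hval]
    exact h4
  have hzero : (c 0).1.parts.card = I.card := by
    rw [hbot]
    exact Finset.card_image_of_injective I Finset.singleton_injective
  have main : ∀ n (hn : n ≤ k), (c ⟨n, Nat.lt_succ_of_le hn⟩).1.parts.card + n = I.card := by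
    intro n
    induction n with
    | zero =>
      intro _
      have h0 : (⟨0, by omega⟩ : Fin (k+1)) = 0 := by ext; simp
      rw [h0]
      simpa using hzero
    | succ m ih =>
      intro hmk
      have h1 := ih (by omega)
      have h2 := key ⟨m, by omega⟩
      have e1 : (⟨m, by omega⟩ : Fin k).castSucc = (⟨m, by omega⟩ : Fin (k+1)) := rfl
      have e2 : (⟨m, by omega⟩ : Fin k).succ = (⟨m + 1, by omega⟩ : Fin (k+1)) := rfl
      rw [e1, e2] at h2
      omega
  have hlast := main k le_rfl
  have hk : (⟨k, by omega⟩ : Fin (k+1)) = Fin.last k := rfl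
  rw [hk, htop] at hlast
  omega
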